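/- Let τ₁, τ₂ ∈ ℍ, set Z = Z(τ₁,τ₂) = [[τ₁τ₂, τ₁],[τ₂, 1]], X = Re Z, Y = Im Z, and let l = [[a,b],[c,d]] be any real 2×2 matrix. Define the orthogonal projection of l onto the plane v⁺ = ℝX + ℝY by l_{v⁺} := ((l,X)/(X,X))·X + ((l,Y)/(Y,Y))·Y. Then (l_{v⁺}, l_{v⁺})/2 = (l, Z)·(l, Z̄) / (Z, Z̄) = |d·τ₁τ₂ − c·τ₁ − b·τ₂ + a|² / (4·Im(τ₁)·Im(τ₂)), where Z̄ is the entrywise complex conjugate of Z. -/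

import Mathlib

noncomputable section

open Complex Matrix

/-- The bilinear form on 2×2 complex matrices obtained by polarizing the quadratic
form `x ↦ −2 det x`: `(x,y) = b₁c₂ + c₁b₂ − a₁d₂ − d₁a₂`. -/
def bform (x y : Matrix (Fin 2) (Fin 2) ℂ) : ℂ :=
  x 0 1 * y 1 0 + x 1 0 * y 0 1 - x 0 0 * y 1 1 - x 1 1 * y 0 0

/-- `Z(τ₁,τ₂) = [[τ₁τ₂, τ₁],[τ₂, 1]]`. -/
def Zmat (τ₁ τ₂ : ℂ) : Matrix (Fin 2) (Fin 2) ℂ := !![τ₁ * τ₂, τ₁; τ₂, 1]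

/-! Write `Z = X + i Y`. Since `Z` is isotropic (`det Z = 0`), `X` and `Y` are orthogonal with
`(X,X) = (Y,Y) = (Z,Z̄)/2 = 2 Im τ₁ Im τ₂`, so `(l_{v⁺},l_{v⁺}) = ((l,X)² + (l,Y)²)/(X,X)`.
By bilinearity `(l,X)² + (l,Y)² = (l,Z)(l,Z̄)`, which for real `l` is `|(l,Z)|²`, and
`(l,Z) = -(dτ₁τ₂ − cτ₁ − bτ₂ + a)`. -/

lemma bform_smul_add_smul_self (r s : ℂ) (x y : Matrix (Fin 2) (Fin 2) ℂ) :
    bform (r • x + s • y) (r • x + s • y) =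
      r ^ 2 * bform x x + 2 * r * s * bform x y + s ^ 2 * bform y y := by
  simp only [bform, Matrix.add_apply, Matrix.smul_apply, smul_eq_mul]
  ring

lemma bform_add_smul_right (l x y : Matrix (Fin 2) (Fin 2) ℂ) (s : ℂ) :
    bform l (x + s • y) = bform l x + s * bform l y := by
  simp only [bform, Matrix.add_apply, Matrix.smul_apply, smul_eq_mul]
  ring

lemma bform_map_conj (x y : Matrix (Fin 2) (Fin 2) ℂ) :
    bform (x.map (starRingEnd ℂ)) (y.map (starRingEnd ℂ)) = starRingEnd ℂ (bform x y) := by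
  simp [bform]

lemma map_re_add_I_smul_map_im {m n : Type*} (M : Matrix m n ℂ) :
    M.map (fun z => (z.re : ℂ)) + I • M.map (fun z => (z.im : ℂ)) = M := by
  ext i j
  simp [mul_comm I, re_add_im]

lemma map_re_add_neg_I_smul_map_im {m n : Type*} (M : Matrix m n ℂ) :
    M.map (fun z => (z.re : ℂ)) + (-I) • M.map (fun z => (z.im : ℂ)) = M.map (starRingEnd ℂ) := by
  ext i j
  apply Complex.ext <;> simp

lemma map_ofReal_map_conj {m n : Type*} (l : Matrix m n ℝ) :
    (l.map ((↑) : ℝ → ℂ)).map (starRingEnd ℂ) = l.map ((↑) : ℝ → ℂ) := by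
  ext i j
  simp

lemma bform_map_ofReal_mul_bform_map_conj (l : Matrix (Fin 2) (Fin 2) ℝ)
    (x : Matrix (Fin 2) (Fin 2) ℂ) :
    bform (l.map (↑)) x * bform (l.map (↑)) (x.map (starRingEnd ℂ)) =
      ((‖bform (l.map (↑)) x‖ ^ 2 : ℝ) : ℂ) := by
  rw [← map_ofReal_map_conj l, bform_map_conj, map_ofReal_map_conj, mul_conj, normSq_eq_norm_sq]

lemma bform_map_ofReal_Zmat (l : Matrix (Fin 2) (Fin 2) ℝ) (τ₁ τ₂ : ℂ) :
    bform (l.map (↑)) (Zmat τ₁ τ₂) =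
      -((l 1 1 : ℂ) * τ₁ * τ₂ - (l 1 0 : ℂ) * τ₁ - (l 0 1 : ℂ) * τ₂ + (l 0 0 : ℂ)) := by
  simp only [bform, Zmat, map_apply, of_apply, cons_val', cons_val_zero, cons_val_one,
    empty_val', cons_val_fin_one]
  ring

lemma bform_Zmat_map_conj (τ₁ τ₂ : ℂ) :
    bform (Zmat τ₁ τ₂) ((Zmat τ₁ τ₂).map (starRingEnd ℂ)) = ((4 * τ₁.im * τ₂.im : ℝ) : ℂ) := by
  apply Complex.ext <;> simp [bform, Zmat] <;> ring

lemma bform_map_re_Zmat_self (τ₁ τ₂ : ℂ) :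
    bform ((Zmat τ₁ τ₂).map (fun z => (z.re : ℂ))) ((Zmat τ₁ τ₂).map (fun z => (z.re : ℂ))) =
      ((2 * τ₁.im * τ₂.im : ℝ) : ℂ) := by
  simp [bform, Zmat]
  ring

lemma bform_map_im_Zmat_self (τ₁ τ₂ : ℂ) :
    bform ((Zmat τ₁ τ₂).map (fun z => (z.im : ℂ))) ((Zmat τ₁ τ₂).map (fun z => (z.im : ℂ))) =
      ((2 * τ₁.im * τ₂.im : ℝ) : ℂ) := by
  simp [bform, Zmat]
  ring

lemma bform_map_re_Zmat_map_im_Zmat (τ₁ τ₂ : ℂ) :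
    bform ((Zmat τ₁ τ₂).map (fun z => (z.re : ℂ))) ((Zmat τ₁ τ₂).map (fun z => (z.im : ℂ))) =
      0 := by
  simp [bform, Zmat]
  ring

theorem stmt19 (τ₁ τ₂ : ℂ) (h₁ : 0 < τ₁.im) (h₂ : 0 < τ₂.im)
    (l : Matrix (Fin 2) (Fin 2) ℝ) :
    ∀ Z X Y lC lproj : Matrix (Fin 2) (Fin 2) ℂ,
      Z = Zmat τ₁ τ₂ →
      X = Z.map (fun z => (z.re : ℂ)) →
      Y = Z.map (fun z => (z.im : ℂ)) →
      lC = l.map (fun x : ℝ => (x : ℂ)) →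
      lproj = (bform lC X / bform X X) • X + (bform lC Y / bform Y Y) • Y →
      bform lproj lproj / 2
          = bform lC Z * bform lC (Z.map (starRingEnd ℂ)) / bform Z (Z.map (starRingEnd ℂ))
        ∧ bform lproj lproj / 2
          = ((‖(l 1 1 : ℂ) * τ₁ * τ₂ - (l 1 0 : ℂ) * τ₁ - (l 0 1 : ℂ) * τ₂
                + (l 0 0 : ℂ)‖ ^ 2 : ℝ) : ℂ) / ((4 * τ₁.im * τ₂.im : ℝ) : ℂ) := by
  intro Z X Y lC lproj hZ hX hY hlC hlproj
  subst hZ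
  have hXX : bform X X = ((2 * τ₁.im * τ₂.im : ℝ) : ℂ) := hX ▸ bform_map_re_Zmat_self τ₁ τ₂
  have hYY : bform Y Y = ((2 * τ₁.im * τ₂.im : ℝ) : ℂ) := hY ▸ bform_map_im_Zmat_self τ₁ τ₂
  have hXY : bform X Y = 0 := hX ▸ hY ▸ bform_map_re_Zmat_map_im_Zmat τ₁ τ₂
  have hlZ : bform lC (Zmat τ₁ τ₂) = bform lC X + I * bform lC Y := by
    rw [hX, hY, ← bform_add_smul_right, map_re_add_I_smul_map_im]
  have hlZbar : bform lC ((Zmat τ₁ τ₂).map (starRingEnd ℂ)) = bform lC X - I * bform lC Y := by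
    rw [hX, hY, sub_eq_add_neg, ← neg_mul, ← bform_add_smul_right, map_re_add_neg_I_smul_map_im]
  have hlZ_mul_hlZbar : bform lC (Zmat τ₁ τ₂) * bform lC ((Zmat τ₁ τ₂).map (starRingEnd ℂ)) =
      bform lC X ^ 2 + bform lC Y ^ 2 := by
    rw [hlZ, hlZbar]
    linear_combination (-bform lC Y ^ 2) * I_sq
  have hy₁ : (τ₁.im : ℂ) ≠ 0 := ofReal_ne_zero.mpr h₁.ne'
  have hy₂ : (τ₂.im : ℂ) ≠ 0 := ofReal_ne_zero.mpr h₂.ne'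
  have hproj : bform lproj lproj / 2 =
      bform lC (Zmat τ₁ τ₂) * bform lC ((Zmat τ₁ τ₂).map (starRingEnd ℂ)) /
        bform (Zmat τ₁ τ₂) ((Zmat τ₁ τ₂).map (starRingEnd ℂ)) := by
    rw [hlproj, bform_smul_add_smul_self, hXX, hYY, hXY, hlZ_mul_hlZbar, bform_Zmat_map_conj]
    push_cast
    field_simp
    ring
  refine ⟨hproj, ?_⟩
  rw [hproj, hlC, bform_map_ofReal_mul_bform_map_conj, bform_map_ofReal_Zmat, norm_neg,
    bform_Zmat_map_conj]
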